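/- Suppose x_1, ..., x_K are independent with x_k ~ Poisson(m_k r_2) for constants m_k > 0, r_2 ~ Gamma(r_1, 1/c_0) (shape r_1, rate c_0), and r_1 ~ Gamma(a_0, 1/b_0). Let l, given Σ_k x_k and r_1, be distributed as CRT(Σ_k x_k, r_1). Then the conditional posterior of r_1 given l is Gamma(a_0 + l, 1/(b_0 − log(1−p))) where p = (Σ_k m_k)/(c_0 + Σ_k m_k). -/

import Mathlib

open Finset MeasureTheory

/-- Gamma density with shape `a` and rate `b`. -/
noncomputable def gammaPDF (a b x : ℝ) : ℝ :=
  if 0 < x then b ^ a / Real.Gamma a * x ^ (a - 1) * Real.exp (-(b * x)) else 0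

/-- Negative binomial pmf `NB(r, p)`. -/
noncomputable def nbD (r p : ℝ) (k : ℕ) : ℝ :=
  Real.Gamma (k + r) / ((Nat.factorial k : ℝ) * Real.Gamma r) * p ^ k * (1 - p) ^ r

/-- Unsigned Stirling numbers of the first kind. -/
def stir : ℕ → ℕ → ℕ
  | 0, 0 => 1
  | 0, _ + 1 => 0
  | n + 1, 0 => n * stir n 0
  | n + 1, j + 1 => n * stir n (j + 1) + stir n j

/-- `CRT(n, r)` pmf: `P(l = j) = |s(n,j)| r^j Γ(r)/Γ(n+r)`. -/
noncomputable def crtD (n j : ℕ) (r : ℝ) : ℝ :=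
  (stir n j : ℝ) * r ^ j * Real.Gamma r / Real.Gamma (n + r)

/-!
In the joint law of `NB(r, p)` and `CRT(n, r)` the factors `Γ(n + r)` and `Γ(r)` cancel, leaving
`|s(n, l)| pⁿ / n! · rˡ (1 - p)ʳ = |s(n, l)| pⁿ / n! · rˡ e^{log(1 - p) r}`. As a function of `r`
this is a Gamma kernel with shape increased by `l` and rate increased by `-log(1 - p)`, so the
Gamma prior on `r` is conjugate, and normalising the product identifies the posterior.
-/

lemma integral_gammaPDF_Ioi {a b : ℝ} (ha : 0 < a) (hb : 0 < b) :
    ∫ x in Set.Ioi (0:ℝ), gammaPDF a b x = 1 := by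
  have hΓ : Real.Gamma a ≠ 0 := (Real.Gamma_pos_of_pos ha).ne'
  calc ∫ x in Set.Ioi (0:ℝ), gammaPDF a b x
      = ∫ x in Set.Ioi (0:ℝ), b ^ a / Real.Gamma a * (x ^ (a - 1) * Real.exp (-(b * x))) :=
        setIntegral_congr_fun measurableSet_Ioi fun x (hx : 0 < x) => by
          rw [gammaPDF, if_pos hx, mul_assoc]
    _ = b ^ a / Real.Gamma a * ((1 / b) ^ a * Real.Gamma a) := by
        rw [integral_const_mul, Real.integral_rpow_mul_exp_neg_mul_Ioi ha hb]
    _ = 1 := by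
        rw [Real.div_rpow zero_le_one hb.le, Real.one_rpow]
        field_simp

lemma eq_integral_mul_gammaPDF {f : ℝ → ℝ} {a b : ℝ} (ha : 0 < a) (hb : 0 < b)
    (hf : ∃ C, ∀ x, 0 < x → f x = C * gammaPDF a b x) :
    ∀ x, 0 < x → f x = (∫ t in Set.Ioi (0:ℝ), f t) * gammaPDF a b x := by
  obtain ⟨C, hC⟩ := hf
  intro x hx
  rw [setIntegral_congr_fun measurableSet_Ioi hC, integral_const_mul,
    integral_gammaPDF_Ioi ha hb, mul_one, hC x hx]

lemma gammaPDF_mul_rpow_mul_exp {a b c s : ℝ} (has : 0 < a + s) (hbc : 0 < b - c) (x : ℝ) :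
    gammaPDF a b x * (x ^ s * Real.exp (c * x)) =
      b ^ a / Real.Gamma a * (Real.Gamma (a + s) / (b - c) ^ (a + s)) *
        gammaPDF (a + s) (b - c) x := by
  unfold gammaPDF
  split_ifs with hx
  · have hΓ : Real.Gamma (a + s) ≠ 0 := (Real.Gamma_pos_of_pos has).ne'
    have hpow : (b - c) ^ (a + s) ≠ 0 := (Real.rpow_pos_of_pos hbc _).ne'
    have hx_rpow : x ^ (a - 1) * x ^ s = x ^ (a + s - 1) := by
      rw [← Real.rpow_add hx]; ring_nf
    have hexp : Real.exp (-(b * x)) * Real.exp (c * x) = Real.exp (-((b - c) * x)) := by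
      rw [← Real.exp_add]; ring_nf
    rw [← hx_rpow, ← hexp]
    field_simp
  · simp

lemma nbD_mul_crtD {r p : ℝ} (hr : 0 < r) (hp : p < 1) (n l : ℕ) :
    nbD r p n * crtD n l r =
      (stir n l : ℝ) * p ^ n / (Nat.factorial n : ℝ) *
        (r ^ (l : ℝ) * Real.exp (Real.log (1 - p) * r)) := by
  have hΓr : Real.Gamma r ≠ 0 := (Real.Gamma_pos_of_pos hr).ne'
  have hΓnr : Real.Gamma (n + r) ≠ 0 := (Real.Gamma_pos_of_pos (by positivity)).ne'
  rw [nbD, crtD, Real.rpow_natCast, ← Real.rpow_def_of_pos (by linarith)]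
  field_simp

theorem gamma_crt_posterior_general (K : ℕ) (a0 b0 c0 : ℝ) (ha0 : 0 < a0) (hb0 : 0 < b0)
    (hc0 : 0 < c0) (m : Fin K → ℝ) (hm : ∀ k, 0 < m k)
    (p : ℝ) (hp : p = (∑ k, m k) / (c0 + ∑ k, m k))
    (n l : ℕ) :
    ∀ x : ℝ, 0 < x →
      gammaPDF a0 b0 x * (nbD x p n * crtD n l x) =
        (∫ t in Set.Ioi (0:ℝ), gammaPDF a0 b0 t * (nbD t p n * crtD n l t)) *
          gammaPDF (a0 + l) (b0 - Real.log (1 - p)) x := by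
  have hsum : 0 ≤ ∑ k, m k := Finset.sum_nonneg fun k _ => (hm k).le
  have hp0 : 0 ≤ p := hp ▸ div_nonneg hsum (by linarith)
  have hp1 : p < 1 := by rw [hp, div_lt_one (by linarith)]; linarith
  have hrate : 0 < b0 - Real.log (1 - p) := by
    linarith [Real.log_nonpos (by linarith : 0 ≤ 1 - p) (by linarith : 1 - p ≤ 1)]
  -- the constant `_` is found by the closing `rfl` of `rw`
  exact eq_integral_mul_gammaPDF (by positivity) hrate ⟨_, fun t ht => by
    rw [nbD_mul_crtD ht hp1, mul_left_comm, gammaPDF_mul_rpow_mul_exp (by positivity) hrate,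
      ← mul_assoc]⟩

/-- If `x_k | r_2 ~ Poisson(m_k r_2)` independently, `r_2 ~ Gamma(r_1, 1/c_0)`,
`r_1 ~ Gamma(a_0, 1/b_0)`, and `l | Σx, r_1 ~ CRT(Σ_k x_k, r_1)` (so that marginally
`Σ_k x_k ~ NB(r_1, p)` with `p = Σm/(c_0+Σm)`), then
`r_1 | l ~ Gamma(a_0 + l, 1/(b_0 - log(1-p)))`. -/
theorem gamma_crt_posterior (K : ℕ) (a0 b0 c0 : ℝ) (ha0 : 0 < a0) (hb0 : 0 < b0)
    (hc0 : 0 < c0) (m : Fin K → ℝ) (hm : ∀ k, 0 < m k)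
    (p : ℝ) (hp : p = (∑ k, m k) / (c0 + ∑ k, m k))
    (n l : ℕ) (hl : l ≤ n) :
    ∀ x : ℝ, 0 < x →
      gammaPDF a0 b0 x * (nbD x p n * crtD n l x) =
        (∫ t in Set.Ioi (0:ℝ), gammaPDF a0 b0 t * (nbD t p n * crtD n l t)) *
          gammaPDF (a0 + l) (b0 - Real.log (1 - p)) x :=
  gamma_crt_posterior_general K a0 b0 c0 ha0 hb0 hc0 m hm p hp n l
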